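/- Let d ≥ 1 be an integer. Then the function s ↦ G(d,2,s,s) = ( (d+2)/(d+1) + (d/(d+1))(1−s) ) · ( s − s^{d+1}/(d+1) ) is concave on the open interval (0,1). -/

import Mathlib

/-- `G(d,x,s,γ) = ((d+x)s/(d+1) + x(1−s)) · (s − (s/(d+1))γ^d)`. -/
noncomputable def Gfun (d : ℕ) (x s γ : ℝ) : ℝ :=
  (((d : ℝ) + x) * s / ((d : ℝ) + 1) + x * (1 - s)) *
    (s - s / ((d : ℝ) + 1) * γ ^ d)

lemma Gfun_hasDerivAt1 (d : ℕ) (s : ℝ) :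
    HasDerivAt (fun s => Gfun d 2 s s)
      (2 - 2 * (d : ℝ) / ((d : ℝ) + 1) * s - 2 * s ^ d
        + (d : ℝ) * ((d : ℝ) + 2) / (((d : ℝ) + 1) ^ 2) * s ^ d * s) s := by
  have hd1 : ((d : ℝ) + 1) ≠ 0 := by positivity
  have h : HasDerivAt (fun s : ℝ =>
      2 * s - (d : ℝ) / ((d : ℝ) + 1) * s ^ 2 - 2 / ((d : ℝ) + 1) * s ^ (d + 1)
        + (d : ℝ) / (((d : ℝ) + 1) ^ 2) * s ^ (d + 2))
      (2 - (d : ℝ) / ((d : ℝ) + 1) * (2 * s) - 2 / ((d : ℝ) + 1) * (((d : ℕ) + 1 : ℕ) * s ^ d)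
        + (d : ℝ) / (((d : ℝ) + 1) ^ 2) * (((d : ℕ) + 2 : ℕ) * s ^ (d + 1))) s := by
    have h1 := (hasDerivAt_id s).const_mul (2 : ℝ)
    have h2 := (hasDerivAt_pow 2 s).const_mul ((d : ℝ) / ((d : ℝ) + 1))
    have h3 := (hasDerivAt_pow (d + 1) s).const_mul ((2 : ℝ) / ((d : ℝ) + 1))
    have h4 := (hasDerivAt_pow (d + 2) s).const_mul ((d : ℝ) / (((d : ℝ) + 1) ^ 2))
    have := ((h1.sub h2).sub h3).add h4
    refine this.congr_deriv ?_
    push_cast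
    ring_nf
  have heq : (fun s => Gfun d 2 s s) = fun s : ℝ =>
      2 * s - (d : ℝ) / ((d : ℝ) + 1) * s ^ 2 - 2 / ((d : ℝ) + 1) * s ^ (d + 1)
        + (d : ℝ) / (((d : ℝ) + 1) ^ 2) * s ^ (d + 2) := by
    funext s
    unfold Gfun
    field_simp
    ring
  rw [heq]
  convert h using 1
  push_cast
  field_simp
  ring

lemma Gfun_hasDerivAt2 (d : ℕ) (s : ℝ) :
    HasDerivAt (fun s : ℝ => 2 - 2 * (d : ℝ) / ((d : ℝ) + 1) * s - 2 * s ^ d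
        + (d : ℝ) * ((d : ℝ) + 2) / (((d : ℝ) + 1) ^ 2) * s ^ d * s)
      (-(2 * (d : ℝ) / ((d : ℝ) + 1)) - 2 * ((d : ℕ) * s ^ (d - 1))
        + (d : ℝ) * ((d : ℝ) + 2) / (((d : ℝ) + 1) ^ 2) * (((d : ℕ) + 1 : ℕ) * s ^ d)) s := by
  have hd1 : ((d : ℝ) + 1) ≠ 0 := by positivity
  have heq : (fun s : ℝ => 2 - 2 * (d : ℝ) / ((d : ℝ) + 1) * s - 2 * s ^ d
        + (d : ℝ) * ((d : ℝ) + 2) / (((d : ℝ) + 1) ^ 2) * s ^ d * s)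
      = fun s : ℝ => 2 - 2 * (d : ℝ) / ((d : ℝ) + 1) * s - 2 * s ^ d
        + (d : ℝ) * ((d : ℝ) + 2) / (((d : ℝ) + 1) ^ 2) * s ^ (d + 1) := by
    funext s
    ring
  rw [heq]
  have h1 := ((hasDerivAt_id s).const_mul (2 * (d : ℝ) / ((d : ℝ) + 1)))
  have h2 := (hasDerivAt_pow d s).const_mul (2 : ℝ)
  have h3 := (hasDerivAt_pow (d + 1) s).const_mul ((d : ℝ) * ((d : ℝ) + 2) / (((d : ℝ) + 1) ^ 2))
  have := (((hasDerivAt_const s (2 : ℝ)).sub h1).sub h2).add h3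
  refine this.congr_deriv ?_
  simp only [Nat.add_sub_cancel]
  push_cast
  ring

/-- For every integer `d ≥ 1`, the function `s ↦ G(d,2,s,s)` is concave on `(0,1)`. -/
theorem Gfun_concaveOn (d : ℕ) (hd : 1 ≤ d) :
    ConcaveOn ℝ (Set.Ioo (0 : ℝ) 1) (fun s => Gfun d 2 s s) := by
  have hint : interior (Set.Ioo (0 : ℝ) 1) = Set.Ioo (0 : ℝ) 1 := interior_Ioo
  apply concaveOn_of_hasDerivWithinAt2_nonpos (convex_Ioo 0 1)
    (f' := fun s => 2 - 2 * (d : ℝ) / ((d : ℝ) + 1) * s - 2 * s ^ d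
        + (d : ℝ) * ((d : ℝ) + 2) / (((d : ℝ) + 1) ^ 2) * s ^ d * s)
    (f'' := fun s => -(2 * (d : ℝ) / ((d : ℝ) + 1)) - 2 * ((d : ℕ) * s ^ (d - 1))
        + (d : ℝ) * ((d : ℝ) + 2) / (((d : ℝ) + 1) ^ 2) * (((d : ℕ) + 1 : ℕ) * s ^ d))
  · exact fun x _ => (Gfun_hasDerivAt1 d x).continuousAt.continuousWithinAt
  · exact fun x hx => (Gfun_hasDerivAt1 d x).hasDerivWithinAt
  · exact fun x hx => (Gfun_hasDerivAt2 d x).hasDerivWithinAt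
  · intro x hx
    rw [hint] at hx
    obtain ⟨hx0, hx1⟩ := hx
    have hd1 : (1 : ℝ) ≤ (d : ℝ) := by exact_mod_cast hd
    have hdpos : (0 : ℝ) < (d : ℝ) + 1 := by positivity
    have hpow : x ^ d = x ^ (d - 1) * x := by
      conv_lhs => rw [show d = (d - 1) + 1 from (Nat.succ_pred_eq_of_pos hd).symm]
      rw [pow_succ]
    have ht0 : (0 : ℝ) ≤ x ^ (d - 1) := by positivity
    have ht1 : x ^ (d - 1) ≤ 1 := pow_le_one₀ hx0.le hx1.le
    push_cast
    rw [hpow]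
    set t := x ^ (d - 1) with ht
    have e : -(2 * (d : ℝ) / ((d : ℝ) + 1)) - 2 * ((d : ℝ) * t)
        + (d : ℝ) * ((d : ℝ) + 2) / (((d : ℝ) + 1) ^ 2) * (((d : ℝ) + 1) * (t * x))
        = (-(2 * (d : ℝ)) - 2 * (d : ℝ) * t * ((d : ℝ) + 1)
            + (d : ℝ) * ((d : ℝ) + 2) * (t * x)) / ((d : ℝ) + 1) := by
      field_simp
    rw [e]
    apply div_nonpos_of_nonpos_of_nonneg _ hdpos.le
    nlinarith [mul_nonneg (mul_nonneg (by linarith : (0:ℝ) ≤ (d:ℝ)) ht0) (by linarith : (0:ℝ) ≤ 1 - x),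
      mul_nonneg (by linarith : (0:ℝ) ≤ (d:ℝ)) ht0]
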